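/- If f(x) = a(cᵀx)^p with c ∈ ℝ^n \ {0} and a ≠ 0, then for every positive integer k, ‖f^k‖_HS = ‖f^k‖_σ = |a|^k ‖c‖₂^{kp}. -/

import Mathlib

open scoped BigOperators
open MvPolynomial

/-- The Bombieri (Hilbert–Schmidt) norm of a homogeneous polynomial of degree `p`:
`‖f‖_HS² = ∑ (p!/(j₁!⋯jₙ!)) φ_j²`, where `f = ∑ (p!/(j₁!⋯jₙ!)) φ_j x^j`; equivalently,
in terms of the monomial coefficients of `f`,
`‖f‖_HS² = ∑_d (∏ᵢ (dᵢ)! / p!) (coeff d f)²`. -/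
noncomputable def bombieriNorm {n : ℕ} (p : ℕ) (f : MvPolynomial (Fin n) ℝ) : ℝ :=
  Real.sqrt (∑ d ∈ f.support,
    ((∏ i, (Nat.factorial (d i) : ℝ)) / (Nat.factorial p : ℝ)) * (f.coeff d) ^ 2)

/-- The `p`-th power of the linear form `x ↦ cᵀx`, as a polynomial. -/
noncomputable def linPow {n : ℕ} (c : Fin n → ℝ) (p : ℕ) : MvPolynomial (Fin n) ℝ :=
  (∑ i, MvPolynomial.C (c i) * MvPolynomial.X i) ^ p


/-- The spectral (sigma) norm of a polynomial: the sup of `|f(x)|` over the unit sphere. -/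
noncomputable def sigmaNorm {n : ℕ} (f : MvPolynomial (Fin n) ℝ) : ℝ :=
  sSup { r | ∃ x : EuclideanSpace ℝ (Fin n), ‖x‖ = 1 ∧
    r = |MvPolynomial.eval (fun i => x i) f| }

/-!
Both norms are absolutely homogeneous and `f ^ k = a ^ k (cᵀx) ^ (k p)`, so it suffices to treat
`(cᵀx) ^ q`. Its coefficient at `x ^ m` is the multinomial coefficient `(q choose m)` times
`c ^ m`, and the Bombieri weight `∏ mᵢ! / q!` cancels one multinomial factor, so
`‖(cᵀx) ^ q‖_HS² = ∑ₘ (q choose m) ∏ (cᵢ²) ^ mᵢ = ‖c‖ ^ (2 q)` by the multinomial theorem.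
On the unit sphere Cauchy–Schwarz gives `|cᵀx| ^ q ≤ ‖c‖ ^ q`, with equality at `x = c / ‖c‖`.
-/

variable {n : ℕ}

lemma bombieriNorm_eq_sqrt_sum_of_support_subset {p : ℕ} {f : MvPolynomial (Fin n) ℝ}
    {s : Finset (Fin n →₀ ℕ)} (h : f.support ⊆ s) :
    bombieriNorm p f =
      √(∑ d ∈ s, ((∏ i, ((d i).factorial : ℝ)) / p.factorial) * f.coeff d ^ 2) := by
  rw [bombieriNorm, Finset.sum_subset h]
  intro d _ hd
  rw [notMem_support_iff.1 hd, sq, mul_zero, mul_zero]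

lemma bombieriNorm_C_mul (p : ℕ) (b : ℝ) (f : MvPolynomial (Fin n) ℝ) :
    bombieriNorm p (C b * f) = |b| * bombieriNorm p f := by
  have hsupp : (C b * f).support ⊆ f.support := smul_eq_C_mul f b ▸ support_smul
  rw [bombieriNorm_eq_sqrt_sum_of_support_subset hsupp, bombieriNorm, ← Real.sqrt_sq_eq_abs,
    ← Real.sqrt_mul (sq_nonneg b), Finset.mul_sum]
  congr 1
  refine Finset.sum_congr rfl fun d _ => ?_
  rw [coeff_C_mul]
  ring

lemma coeff_linPow (c : Fin n → ℝ) (q : ℕ) (d : Fin n →₀ ℕ) :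
    (linPow c q).coeff d =
      if ∑ i, d i = q then (Nat.multinomial Finset.univ d : ℝ) * ∏ i, c i ^ d i else 0 := by
  simp only [linPow, ← smul_eq_C_mul, coeff_linearCombination_X_pow_of_fintype,
    Finsupp.sum_fintype _ (fun _ m => m) (fun _ => rfl),
    Finsupp.prod_fintype _ _ (fun i => pow_zero (c i)),
    Finsupp.multinomial_eq_of_support_subset (Finset.subset_univ d.support)]

lemma support_linPow_subset (c : Fin n → ℝ) (q : ℕ) :
    (linPow c q).support ⊆
      (Finset.univ.piAntidiag q).map Finsupp.equivFunOnFinite.symm.toEmbedding := by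
  intro d hd
  rw [mem_support_iff, coeff_linPow, ne_eq, ite_eq_right_iff, not_forall] at hd
  obtain ⟨hdeg, -⟩ := hd
  simp [Finset.mem_piAntidiag, hdeg]

lemma bombieriNorm_linPow (c : EuclideanSpace ℝ (Fin n)) (q : ℕ) :
    bombieriNorm q (linPow (fun i => c i) q) = ‖c‖ ^ q := by
  rw [bombieriNorm_eq_sqrt_sum_of_support_subset (support_linPow_subset _ q), Finset.sum_map]
  simp only [Equiv.coe_toEmbedding, Finsupp.coe_equivFunOnFinite_symm]
  have hterm : ∀ m ∈ Finset.univ.piAntidiag q,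
      (∏ i, ((m i).factorial : ℝ)) / q.factorial *
          (linPow (fun i => c i) q).coeff (Finsupp.equivFunOnFinite.symm m) ^ 2 =
        Nat.multinomial Finset.univ m * ∏ i, (c i ^ 2) ^ m i := by
    intro m hm
    have hdeg : ∑ i, m i = q := (Finset.mem_piAntidiag.1 hm).1
    have hspec : (∏ i, ((m i).factorial : ℝ)) * Nat.multinomial Finset.univ m = q.factorial := by
      exact_mod_cast hdeg ▸ Nat.multinomial_spec Finset.univ m
    have hq : (q.factorial : ℝ) ≠ 0 := by positivity
    simp only [coeff_linPow, Finsupp.coe_equivFunOnFinite_symm, hdeg, if_true]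
    rw [div_mul_eq_mul_div, div_eq_iff hq, ← hspec, mul_pow, ← Finset.prod_pow]
    simp only [← pow_mul, mul_comm _ 2]
    ring
  rw [Finset.sum_congr rfl hterm, ← Finset.sum_pow_eq_sum_piAntidiag,
    ← EuclideanSpace.real_norm_sq_eq, ← pow_mul, mul_comm, pow_mul, Real.sqrt_sq (by positivity)]

lemma eval_linPow (c x : EuclideanSpace ℝ (Fin n)) (q : ℕ) :
    eval (fun i => x i) (linPow (fun i => c i) q) = inner ℝ c x ^ q := by
  simp [linPow, PiLp.inner_apply, mul_comm]

lemma sigmaNorm_C_mul (b : ℝ) (f : MvPolynomial (Fin n) ℝ) :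
    sigmaNorm (C b * f) = |b| * sigmaNorm f := by
  rw [sigmaNorm, sigmaNorm, ← smul_eq_mul (a := |b|), ← Real.sSup_smul_of_nonneg (abs_nonneg b)]
  congr 1
  ext r
  simp [Set.mem_smul_set, abs_mul, eq_comm]

lemma sigmaNorm_linPow {c : EuclideanSpace ℝ (Fin n)} (hc : c ≠ 0) (q : ℕ) :
    sigmaNorm (linPow (fun i => c i) q) = ‖c‖ ^ q := by
  have hc' : ‖c‖ ≠ 0 := norm_ne_zero_iff.2 hc
  refine IsGreatest.csSup_eq ⟨⟨‖c‖⁻¹ • c, ?_, ?_⟩, ?_⟩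
  · rw [norm_smul, norm_inv, norm_norm, inv_mul_cancel₀ hc']
  · rw [eval_linPow, real_inner_smul_right, real_inner_self_eq_norm_sq, sq,
      inv_mul_cancel_left₀ hc', abs_pow, abs_norm]
  · rintro r ⟨x, hx, rfl⟩
    rw [eval_linPow, abs_pow]
    gcongr
    simpa [hx] using abs_real_inner_le_norm c x

theorem bombieriNorm_pow_linPow_general {n p : ℕ} (a : ℝ) (c : EuclideanSpace ℝ (Fin n))
    (hc : c ≠ 0)
    (f : MvPolynomial (Fin n) ℝ)
    (hfa : f = MvPolynomial.C a * linPow (fun i => c i) p) :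
    ∀ k : ℕ, 0 < k →
      bombieriNorm (k * p) (f ^ k) = |a| ^ k * ‖c‖ ^ (k * p) ∧
      sigmaNorm (f ^ k) = |a| ^ k * ‖c‖ ^ (k * p) := by
  intro k _
  have hfk : f ^ k = C (a ^ k) * linPow (fun i => c i) (k * p) := by
    rw [hfa, mul_pow, ← map_pow, linPow, linPow, ← pow_mul, mul_comm p k]
  rw [hfk, bombieriNorm_C_mul, bombieriNorm_linPow, sigmaNorm_C_mul, sigmaNorm_linPow hc, abs_pow]
  exact ⟨rfl, rfl⟩

/-- If `f(x) = a (cᵀx)^p` with `c ≠ 0`, `a ≠ 0`, then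
`‖f^k‖_HS = ‖f^k‖_σ = |a|^k ‖c‖₂^{kp}` for every positive integer `k`. -/
theorem bombieriNorm_pow_linPow {n p : ℕ} (a : ℝ) (c : EuclideanSpace ℝ (Fin n))
    (ha : a ≠ 0) (hc : c ≠ 0)
    (f : MvPolynomial (Fin n) ℝ)
    (hfa : f = MvPolynomial.C a * linPow (fun i => c i) p) :
    ∀ k : ℕ, 0 < k →
      bombieriNorm (k * p) (f ^ k) = |a| ^ k * ‖c‖ ^ (k * p) ∧
      sigmaNorm (f ^ k) = |a| ^ k * ‖c‖ ^ (k * p) :=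
  bombieriNorm_pow_linPow_general a c hc f hfa
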